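/- Let J : ℝ → Matrix (Fin 3) (Fin 3) ℝ be differentiable at t₀ with det(J(t₀)) ≠ 0, and define A(t) = det(J(t)) • (J(t))⁻¹ * ((J(t))⁻¹)ᵀ. Then A is differentiable at t₀ and A'(t₀) = trace(J'(t₀) * (J(t₀))⁻¹) • A(t₀) − (J(t₀))⁻¹ * J'(t₀) * A(t₀) − ((J(t₀))⁻¹ * J'(t₀) * A(t₀))ᵀ, where J'(t₀) denotes the derivative of J at t₀. -/

import Mathlib

/-!
Jacobi's formula `(det J)' = trace (J' * adj J) = det J * trace (J' * J⁻¹)` comes from the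
multilinearity of the determinant in the rows, and `(J⁻¹)' = -J⁻¹ * J' * J⁻¹` is the derivative
of inversion in a Banach algebra. The product rule applied to `det J • (J⁻¹ * (J⁻¹)ᵀ)` then
yields the formula, since `J⁻¹ * J' * A = -det J • (J⁻¹)' * (J⁻¹)ᵀ` and its transpose is
`-det J • J⁻¹ * ((J⁻¹)')ᵀ`.
-/

open Matrix

attribute [local instance] Matrix.normedAddCommGroup Matrix.normedSpace

variable {𝕜 : Type*} [NontriviallyNormedField 𝕜] {n : Type*} [Fintype n]

theorem HasDerivAt.matrix_transpose {m : Type*} [Fintype m] {A : 𝕜 → Matrix m n 𝕜}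
    {A' : Matrix m n 𝕜} {t : 𝕜} (hA : HasDerivAt A A' t) :
    HasDerivAt (fun t => (A t)ᵀ) A'ᵀ t :=
  let transposeL : Matrix m n 𝕜 →L[𝕜] Matrix n m 𝕜 :=
    { toLinearMap := (transposeLinearEquiv m n 𝕜 𝕜).toLinearMap
      cont := continuous_id.matrix_transpose }
  transposeL.hasFDerivAt.comp_hasDerivAt t hA

variable [DecidableEq n]

theorem Matrix.sum_det_updateRow {R : Type*} [CommRing R] (X H : Matrix n n R) :
    ∑ i, (X.updateRow i (H i)).det = trace (H * adjugate X) := by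
  simp_rw [← cramer_transpose_apply, cramer_eq_adjugate_mulVec, ← adjugate_transpose]
  simp [trace, mul_apply, mulVec, dotProduct, mul_comm]

theorem Matrix.adjugate_eq_det_smul_inv {R : Type*} [CommRing R] {X : Matrix n n R}
    (h : IsUnit X.det) : adjugate X = X.det • X⁻¹ :=
  calc adjugate X = adjugate X * (X * X⁻¹) := by rw [mul_nonsing_inv _ h, Matrix.mul_one]
    _ = X.det • X⁻¹ := by rw [← Matrix.mul_assoc, adjugate_mul, Matrix.smul_mul, Matrix.one_mul]

def Matrix.detRowContinuousMultilinear : ContinuousMultilinearMap 𝕜 (fun _ : n => n → 𝕜) 𝕜 :=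
  { (detRowAlternating : (n → 𝕜) [⋀^n]→ₗ[𝕜] 𝕜).toMultilinearMap with
    cont := continuous_id.matrix_det }

section Curves

variable {t : 𝕜}

theorem HasDerivAt.matrix_det {A : 𝕜 → Matrix n n 𝕜} {A' : Matrix n n 𝕜}
    (hA : HasDerivAt A A' t) :
    HasDerivAt (fun t => (A t).det) (trace (A' * adjugate (A t))) t := by
  rw [← sum_det_updateRow (A t) A']
  exact ((detRowContinuousMultilinear.hasFDerivAt (A t)).comp_hasDerivAt t hA).congr_deriv
    (ContinuousMultilinearMap.linearDeriv_apply _ _ _)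

/- The two rules below are those of a normed algebra. The sup norm in force is not
submultiplicative, but `HasDerivAt` only sees the topology, which the operator norm
`linftyOpNormedRing` shares. -/

theorem HasDerivAt.matrix_mul {A B : 𝕜 → Matrix n n 𝕜} {A' B' : Matrix n n 𝕜}
    (hA : HasDerivAt A A' t) (hB : HasDerivAt B B' t) :
    HasDerivAt (fun t => A t * B t) (A' * B t + A t * B') t :=
  let _ : NormedRing (Matrix n n 𝕜) := Matrix.linftyOpNormedRing
  let _ : NormedAlgebra 𝕜 (Matrix n n 𝕜) := Matrix.linftyOpNormedAlgebra
  hA.mul hB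

theorem HasDerivAt.matrix_inv [CompleteSpace 𝕜] {A : 𝕜 → Matrix n n 𝕜} {A' : Matrix n n 𝕜}
    (hA : HasDerivAt A A' t) (h : IsUnit (A t).det) :
    HasDerivAt (fun t => (A t)⁻¹) (-((A t)⁻¹ * A' * (A t)⁻¹)) t := by
  let _ : NormedRing (Matrix n n 𝕜) := Matrix.linftyOpNormedRing
  let _ : NormedAlgebra 𝕜 (Matrix n n 𝕜) := Matrix.linftyOpNormedAlgebra
  -- instance search does not see that the operator-norm uniformity is the product one
  have : HasSummableGeomSeries (Matrix n n 𝕜) :=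
    @instHasSummableGeomSeriesOfCompleteSpace _ _ (by exact instCompleteSpace _ _ _)
  have hinv := (hasFDerivAt_ringInverse (𝕜 := 𝕜)
    ((A t).isUnit_iff_isUnit_det.mpr h).unit).comp_hasDerivAt t hA
  simp_rw [nonsing_inv_eq_ringInverse]
  refine hinv.congr_deriv ?_
  simp [Matrix.mul_assoc, nonsing_inv_eq_ringInverse]

end Curves

/-- Derivative of the mass deformation coefficient
`A(t) = det J(t) • J(t)⁻¹ * (J(t)⁻¹)ᵀ`. -/
theorem deriv_mass_coefficient
    (J : ℝ → Matrix (Fin 3) (Fin 3) ℝ) (J' : Matrix (Fin 3) (Fin 3) ℝ) (t₀ : ℝ)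
    (hJ : HasDerivAt J J' t₀) (hdet : (J t₀).det ≠ 0)
    (A : ℝ → Matrix (Fin 3) (Fin 3) ℝ)
    (hA : ∀ t, A t = (J t).det • ((J t)⁻¹ * ((J t)⁻¹)ᵀ)) :
    HasDerivAt A
      ((Matrix.trace (J' * (J t₀)⁻¹)) • A t₀
        - (J t₀)⁻¹ * J' * A t₀
        - ((J t₀)⁻¹ * J' * A t₀)ᵀ) t₀ := by
  have hunit : IsUnit (J t₀).det := isUnit_iff_ne_zero.mpr hdet
  have hinv := hJ.matrix_inv hunit
  rw [funext hA]
  refine (hJ.matrix_det.fun_smul (hinv.matrix_mul hinv.matrix_transpose)).congr_deriv ?_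
  rw [adjugate_eq_det_smul_inv hunit]
  simp only [Matrix.mul_smul, trace_smul, transpose_smul, transpose_mul, transpose_neg,
    Matrix.neg_mul, Matrix.mul_neg, Matrix.mul_assoc, smul_smul, smul_add, smul_neg,
    transpose_transpose, smul_eq_mul]
  rw [mul_comm (J t₀).det]
  abel
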